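/- The number of well labelled trees with n edges equals (2/(n+2)) times the number of unconstrained well labelled trees with n edges, i.e. |W_n| = (2/(n+2)) · (3^n/(n+1)) · C(2n,n). -/

import Mathlib

/-- Rooted plane trees with integer labels on vertices. -/
inductive LTree : Type
  | node : ℤ → List LTree → LTree

namespace LTree

/-- The label of the root. -/
def label : LTree → ℤ
  | .node v _ => v

mutual
  /-- Number of edges of a labelled plane tree. -/
  def numEdges : LTree → ℕ
    | .node _ ts => numEdgesL ts
  def numEdgesL : List LTree → ℕ
    | [] => 0
    | t :: r => numEdges t + 1 + numEdgesL r
end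

mutual
  /-- The labels of two adjacent vertices differ by at most 1. -/
  def Good : LTree → Prop
    | .node v ts => GoodL v ts
  def GoodL : ℤ → List LTree → Prop
    | _, [] => True
    | v, t :: r => |label t - v| ≤ 1 ∧ Good t ∧ GoodL v r
end

mutual
  /-- The multiset of all vertex labels. -/
  def labels : LTree → Multiset ℤ
    | .node v ts => v ::ₘ labelsL ts
  def labelsL : List LTree → Multiset ℤ
    | [] => 0
    | t :: r => labels t + labelsL r
end

end LTree

/-- Unconstrained well labelled trees (labels in `ℤ`) with `n` edges. -/
def EmbTrees (n : ℕ) : Set LTree :=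
  {T | T.Good ∧ T.label = 1 ∧ T.numEdges = n}

/-- Well labelled trees with `n` edges: positive labels, root label `1`,
adjacent labels differing by at most `1`. -/
def WLTrees (n : ℕ) : Set LTree :=
  {T | T.Good ∧ (∀ v ∈ T.labels, 1 ≤ v) ∧ T.label = 1 ∧ T.numEdges = n}

/-!
Let `U = ∑ uₙ xⁿ`, `uₙ = 3ⁿ Cat(n)`, count unconstrained trees by edges and `F_j` count trees
with positive labels and root label `j`, so that `F_1 = ∑ wₙ xⁿ`. Decomposing at the first
child of the root gives `U = 1 + 3xU²` and `F_j = 1 + x (F_{j-1} + F_j + F_{j+1}) F_j` for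
`j ≥ 1`, with `F_0 = 0`. This three-term recursion has the first integral
`I(a, b) = 3(a + b - ab) + 3xab(a + b)`, so `I(F_j, F_{j+1})` does not depend on `j`. A tree
with fewer than `j` edges and root label `j` never reaches label `0`, so `F_j ≡ U mod xʲ`;
letting `j → ∞` gives `3F_1 = I(F_0, F_1) = I(U, U) = 4U - U²`. Extracting coefficients,
`9 wₙ = 12 uₙ - uₙ₊₁`, and `(n + 2) Cat(n + 1) = 2(2n + 1) Cat(n)` turns this into
`(n + 2) wₙ = 2 uₙ`.
-/

open Finset PowerSeries

noncomputable section

open scoped Classical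

theorem Finset.sum_Icc_sub_one_add_one {M : Type*} [AddCommMonoid M] (f : ℤ → M) (c : ℤ) :
    ∑ d ∈ Icc (c - 1) (c + 1), f d = f (c - 1) + f c + f (c + 1) := by
  rw [show Icc (c - 1) (c + 1) = {c - 1, c, c + 1} by ext; simp; omega,
    sum_insert (by simp only [mem_insert, mem_singleton]; omega), sum_pair (by omega), add_assoc]

namespace LTree

mutual
theorem abs_sub_label_le_numEdges :
    ∀ T : LTree, T.Good → ∀ v ∈ T.labels, |v - T.label| ≤ T.numEdges
  | .node c ts, h, v, hv => by
    rw [labels, Multiset.mem_cons] at hv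
    rcases hv with rfl | hv
    · simp [label]
    · exact abs_sub_le_numEdgesL c ts h v hv

theorem abs_sub_le_numEdgesL :
    ∀ (c : ℤ) (ts : List LTree), GoodL c ts → ∀ v ∈ labelsL ts, |v - c| ≤ numEdgesL ts
  | _, [], _, v, hv => by simp [labelsL] at hv
  | c, t :: r, ⟨ht, hgt, hr⟩, v, hv => by
    rw [labelsL, Multiset.mem_add] at hv
    rw [numEdgesL]
    push_cast
    rcases hv with hv | hv
    · have := abs_sub_label_le_numEdges t hgt v hv
      rw [abs_le] at *
      omega
    · have := abs_sub_le_numEdgesL c r hr v hv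
      rw [abs_le] at *
      omega
end

variable (A : ℤ → Prop)

/-- The lists of subtrees that can hang below a vertex labelled `c`, with `n` edges in total
counting the edges to their roots; see `mem_forests`. -/
def forests : ℤ → ℕ → Finset (List LTree)
  | _, 0 => {[]}
  | c, n + 1 => (antidiagonal n).attach.biUnion fun p =>
      (((Icc (c - 1) (c + 1)).biUnion fun d =>
          if A d then (forests d p.1.1).image (node d) else ∅) ×ˢ
        forests c p.1.2).image fun q => q.1 :: q.2
  termination_by _ n => n
  decreasing_by
    · have := mem_antidiagonal.mp p.2; omega
    · have := mem_antidiagonal.mp p.2; omega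

def trees (c : ℤ) (n : ℕ) : Finset LTree :=
  if A c then (forests A c n).image (node c) else ∅

theorem forests_zero (c : ℤ) : forests A c 0 = {[]} := by rw [forests]

theorem forests_succ (c : ℤ) (n : ℕ) :
    forests A c (n + 1) = (antidiagonal n).biUnion fun p =>
      (((Icc (c - 1) (c + 1)).biUnion fun d => trees A d p.1) ×ˢ forests A c p.2).image
        fun q => q.1 :: q.2 := by
  rw [forests]
  ext
  simp [trees]

theorem mem_trees_iff_of_mem_forests_iff {c : ℤ} {n : ℕ}
    (h : ∀ ts, ts ∈ forests A c n ↔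
      GoodL c ts ∧ (∀ v ∈ labelsL ts, A v) ∧ numEdgesL ts = n) (T : LTree) :
    T ∈ trees A c n ↔
      T.Good ∧ (∀ v ∈ T.labels, A v) ∧ T.label = c ∧ T.numEdges = n := by
  obtain ⟨v, ts⟩ := T
  simp only [trees, Good, labels, label, numEdges, Multiset.mem_cons, forall_eq_or_imp]
  split_ifs with hc
  · simp only [mem_image, node.injEq, h, exists_eq_right_right]
    constructor
    · rintro ⟨⟨hg, hA, hn⟩, rfl⟩
      exact ⟨hg, ⟨hc, hA⟩, rfl, hn⟩
    · rintro ⟨hg, ⟨-, hA⟩, rfl, hn⟩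
      exact ⟨⟨hg, hA, hn⟩, rfl⟩
  · simp only [notMem_empty, false_iff]
    rintro ⟨-, ⟨hv, -⟩, rfl, -⟩
    exact hc hv

theorem mem_forests (c : ℤ) (n : ℕ) (ts : List LTree) :
    ts ∈ forests A c n ↔ GoodL c ts ∧ (∀ v ∈ labelsL ts, A v) ∧ numEdgesL ts = n := by
  induction n using Nat.strong_induction_on generalizing c ts with
  | _ n ih =>
  rcases n with _ | n
  · cases ts <;> simp [forests_zero, GoodL, labelsL, numEdgesL]
  · cases ts with
    | nil => simp [forests_succ, numEdgesL]
    | cons t r =>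
      simp only [forests_succ, mem_biUnion, mem_image, mem_product,
        HasAntidiagonal.mem_antidiagonal, mem_Icc, List.cons.injEq, GoodL, labelsL, numEdgesL,
        Multiset.mem_add, Prod.exists]
      constructor
      · rintro ⟨a, b, hab, t, r, ⟨⟨d, hd, ht⟩, hr⟩, rfl, rfl⟩
        obtain ⟨htg, htA, rfl, rfl⟩ :=
          (mem_trees_iff_of_mem_forests_iff A (ih a (by omega) d) t).mp ht
        obtain ⟨hrg, hrA, rfl⟩ := (ih b (by omega) c r).mp hr
        refine ⟨⟨abs_le.mpr ⟨by omega, by omega⟩, htg, hrg⟩, ?_, by omega⟩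
        rintro v (hv | hv)
        exacts [htA v hv, hrA v hv]
      · rintro ⟨⟨hlabel, htg, hrg⟩, hA, hedges⟩
        have := abs_le.mp hlabel
        refine ⟨t.numEdges, numEdgesL r, by omega, t, r, ⟨⟨t.label, by omega, ?_⟩, ?_⟩,
          rfl, rfl⟩
        · exact (mem_trees_iff_of_mem_forests_iff A (ih _ (by omega) _) t).mpr
            ⟨htg, fun v hv => hA v (.inl hv), rfl, rfl⟩
        · exact (ih _ (by omega) c r).mpr ⟨hrg, fun v hv => hA v (.inr hv), rfl⟩

theorem mem_trees (c : ℤ) (n : ℕ) (T : LTree) :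
    T ∈ trees A c n ↔
      T.Good ∧ (∀ v ∈ T.labels, A v) ∧ T.label = c ∧ T.numEdges = n :=
  mem_trees_iff_of_mem_forests_iff A (mem_forests A c n) T

variable {A} in
theorem trees_congr {B : ℤ → Prop} {c : ℤ} {n : ℕ}
    (h : ∀ v, |v - c| ≤ n → (A v ↔ B v)) :
    trees A c n = trees B c n := by
  ext T
  simp only [mem_trees, and_congr_left_iff, and_congr_right_iff]
  rintro hT ⟨rfl, rfl⟩
  exact forall₂_congr fun v hv => h v (abs_sub_label_le_numEdges T hT v hv)

theorem trees_eq_empty {c : ℤ} (hc : ¬ A c) (n : ℕ) : trees A c n = ∅ := if_neg hc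

theorem card_trees_eq_card_forests {c : ℤ} (hc : A c) (n : ℕ) :
    #(trees A c n) = #(forests A c n) := by
  rw [trees, if_pos hc, card_image_of_injective _ fun _ _ h => by injection h]

theorem card_trees_zero {c : ℤ} (hc : A c) : #(trees A c 0) = 1 := by
  rw [card_trees_eq_card_forests A hc, forests_zero, card_singleton]

theorem card_forests_succ (c : ℤ) (n : ℕ) :
    #(forests A c (n + 1)) = ∑ p ∈ antidiagonal n,
      (∑ d ∈ Icc (c - 1) (c + 1), #(trees A d p.1)) * #(forests A c p.2) := by
  rw [forests_succ, card_biUnion]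
  · refine sum_congr rfl fun p _ => ?_
    rw [card_image_of_injective _ fun _ _ h => Prod.ext (List.head_eq_of_cons_eq h)
      (List.tail_eq_of_cons_eq h), card_product, card_biUnion]
    intro d _ d' _ hd
    refine disjoint_left.mpr fun T h h' => hd ?_
    rw [← ((mem_trees A _ _ T).mp h).2.2.1, ((mem_trees A _ _ T).mp h').2.2.1]
  · intro p hp q hq hpq
    refine disjoint_left.mpr fun ts h h' => hpq ?_
    simp only [mem_image, mem_product, mem_biUnion] at h h'
    obtain ⟨⟨t, r⟩, ⟨⟨d, -, ht⟩, -⟩, rfl⟩ := h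
    obtain ⟨⟨t', r'⟩, ⟨⟨d', -, ht'⟩, -⟩, he⟩ := h'
    obtain ⟨rfl, -⟩ := List.cons_eq_cons.mp he
    have h1 := ((mem_trees A _ _ _).mp ht).2.2.2
    have h2 := ((mem_trees A _ _ _).mp ht').2.2.2
    have := mem_antidiagonal.mp hp
    have := mem_antidiagonal.mp hq
    ext <;> simp only at h1 h2 ⊢ <;> omega

theorem card_trees_succ {c : ℤ} (hc : A c) (n : ℕ) :
    #(trees A c (n + 1)) = ∑ p ∈ antidiagonal n,
      (∑ d ∈ Icc (c - 1) (c + 1), #(trees A d p.1)) * #(trees A c p.2) := by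
  simp only [card_trees_eq_card_forests A hc, card_forests_succ]

theorem card_trees_true (c : ℤ) (n : ℕ) :
    #(trees (fun _ => True) c n) = 3 ^ n * catalan n := by
  induction n using Nat.strong_induction_on generalizing c with
  | _ n ih =>
  rcases n with _ | n
  · simp [card_trees_zero]
  · rw [card_trees_succ _ trivial, catalan_succ', mul_sum]
    refine sum_congr rfl fun p hp => ?_
    have hp := mem_antidiagonal.mp hp
    simp only [sum_Icc_sub_one_add_one, ih p.1 (by omega), ih p.2 (by omega)]
    rw [← hp, pow_succ, pow_add]
    ring

end LTree

section FirstIntegral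

variable {R : Type*} [CommRing R] (x : R)

def firstIntegral (a b : R) : R := 3 * (a + b - a * b) + 3 * x * (a * b * (a + b))

variable {x}

theorem firstIntegral_eq_of_eq_one_add {a b c : R} (h : b = 1 + x * ((a + b + c) * b)) :
    firstIntegral x b c = firstIntegral x a b := by
  unfold firstIntegral
  -- the difference of the two sides factors as `3 (c - a) (1 - b + x (a + b + c) b)`
  linear_combination (3 * (a - c)) * h

theorem firstIntegral_self_of_eq_one_add {u : R} (h : u = 1 + 3 * x * u ^ 2) :
    firstIntegral x u u = 4 * u - u ^ 2 := by
  unfold firstIntegral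
  linear_combination (-2 * u) * h

theorem map_firstIntegral {S : Type*} [CommRing S] (f : R →+* S) (a b : R) :
    f (firstIntegral x a b) = firstIntegral (f x) (f a) (f b) := by
  simp [firstIntegral, map_ofNat]

theorem dvd_firstIntegral_sub {z a b u : R} (ha : z ∣ a - u) (hb : z ∣ b - u) :
    z ∣ firstIntegral x a b - firstIntegral x u u := by
  simp only [← Ideal.mem_span_singleton, ← Ideal.Quotient.eq] at *
  rw [map_firstIntegral, map_firstIntegral, ha, hb]

end FirstIntegral

namespace LTree

variable (A : ℤ → Prop)

def treeSeries (c : ℤ) : ℚ⟦X⟧ := mk fun n => (#(trees A c n) : ℚ)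

theorem treeSeries_eq_zero {c : ℤ} (hc : ¬ A c) : treeSeries A c = 0 := by
  ext n
  simp [treeSeries, trees_eq_empty A hc]

theorem treeSeries_eq_one_add {c : ℤ} (hc : A c) :
    treeSeries A c = 1 + X * ((treeSeries A (c - 1) + treeSeries A c + treeSeries A (c + 1)) *
      treeSeries A c) := by
  ext n
  rcases n with _ | n
  · simp [treeSeries, card_trees_zero A hc]
  · rw [map_add, coeff_one, if_neg n.succ_ne_zero, coeff_succ_X_mul, coeff_mul]
    simp [treeSeries, card_trees_succ A hc, sum_Icc_sub_one_add_one]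

end LTree

open LTree

def unconstrainedSeries : ℚ⟦X⟧ := mk fun n => (3 ^ n * catalan n : ℕ)

theorem treeSeries_true (c : ℤ) : treeSeries (fun _ => True) c = unconstrainedSeries := by
  ext n
  simp [treeSeries, unconstrainedSeries, card_trees_true]

theorem unconstrainedSeries_eq_one_add :
    unconstrainedSeries = 1 + 3 * X * unconstrainedSeries ^ 2 := by
  have := treeSeries_eq_one_add (fun _ => True) (c := 0) trivial
  simp only [treeSeries_true] at this
  linear_combination this

theorem X_pow_dvd_treeSeries_pos_sub (j : ℕ) :
    X ^ j ∣ treeSeries (1 ≤ ·) j - unconstrainedSeries := by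
  rw [X_pow_dvd_iff]
  intro m hm
  have : trees (1 ≤ ·) j m = trees (fun _ => True) j m :=
    trees_congr fun v hv => by rw [abs_le] at hv; simp only [iff_true]; omega
  rw [← treeSeries_true j, map_sub, sub_eq_zero]
  simp only [treeSeries, coeff_mk, this]

theorem three_mul_treeSeries_pos_one :
    3 * treeSeries (1 ≤ ·) 1 = 4 * unconstrainedSeries - unconstrainedSeries ^ 2 := by
  set F : ℕ → ℚ⟦X⟧ := fun j => treeSeries (1 ≤ ·) j
  set U := unconstrainedSeries
  have hstep (j : ℕ) :
      firstIntegral X (F (j + 1)) (F (j + 2)) = firstIntegral X (F j) (F (j + 1)) := by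
    apply firstIntegral_eq_of_eq_one_add
    have := treeSeries_eq_one_add (1 ≤ ·) (c := j + 1) (by omega)
    simpa [F, add_assoc, one_add_one_eq_two] using this
  have hconst (j : ℕ) : firstIntegral X (F j) (F (j + 1)) = firstIntegral X (F 0) (F 1) := by
    induction j with
    | zero => rfl
    | succ j ih => rw [hstep, ih]
  have hdvd (j : ℕ) : X ^ j ∣ firstIntegral X (F 0) (F 1) - (4 * U - U ^ 2) := by
    rw [← hconst j, ← firstIntegral_self_of_eq_one_add unconstrainedSeries_eq_one_add]
    exact dvd_firstIntegral_sub (X_pow_dvd_treeSeries_pos_sub j)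
      ((pow_dvd_pow X j.le_succ).trans (X_pow_dvd_treeSeries_pos_sub (j + 1)))
  have hzero : F 0 = 0 := treeSeries_eq_zero _ (by norm_num)
  have : firstIntegral X (F 0) (F 1) = 4 * U - U ^ 2 := by
    ext n
    rw [← sub_eq_zero, ← map_sub]
    exact X_pow_dvd_iff.mp (hdvd (n + 1)) n n.lt_succ_self
  simpa [firstIntegral, hzero, F] using this

theorem nine_mul_card_trees_pos_one (n : ℕ) :
    9 * (#(trees (1 ≤ ·) 1 n) : ℚ) =
      12 * (3 ^ n * catalan n : ℕ) - (3 ^ (n + 1) * catalan (n + 1) : ℕ) := by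
  have h : X * (C 9 * treeSeries (1 ≤ ·) 1) =
      C 12 * (X * unconstrainedSeries) - unconstrainedSeries + 1 := by
    rw [map_ofNat, map_ofNat]
    linear_combination 3 * X * three_mul_treeSeries_pos_one + unconstrainedSeries_eq_one_add
  have := congrArg (coeff (n + 1)) h
  simpa [coeff_succ_X_mul, coeff_C_mul, treeSeries, unconstrainedSeries] using this

theorem succ_succ_mul_catalan_succ (n : ℕ) :
    (n + 2) * catalan (n + 1) = 2 * (2 * n + 1) * catalan n := by
  refine Nat.eq_of_mul_eq_mul_left n.succ_pos ?_
  calc (n + 1) * ((n + 2) * catalan (n + 1))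
      = (n + 1) * Nat.centralBinom (n + 1) := by rw [← succ_mul_catalan_eq_centralBinom]
    _ = 2 * (2 * n + 1) * Nat.centralBinom n := Nat.succ_mul_centralBinom_succ n
    _ = (n + 1) * (2 * (2 * n + 1) * catalan n) := by
      rw [← succ_mul_catalan_eq_centralBinom]; ring

theorem WLTrees_eq_trees (n : ℕ) : WLTrees n = trees (1 ≤ ·) 1 n := by
  ext T
  simp [WLTrees, mem_trees]

theorem EmbTrees_eq_trees (n : ℕ) : EmbTrees n = trees (fun _ => True) 1 n := by
  ext T
  simp [EmbTrees, mem_trees]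

theorem succ_succ_mul_card_trees_pos_one (n : ℕ) :
    (n + 2) * #(trees (1 ≤ ·) 1 n) = 2 * (3 ^ n * catalan n) := by
  have h9 := nine_mul_card_trees_pos_one n
  have hcat : ((n + 2) * catalan (n + 1) : ℚ) = 2 * (2 * n + 1) * catalan n := by
    exact_mod_cast succ_succ_mul_catalan_succ n
  suffices ((n + 2) * #(trees (1 ≤ ·) 1 n) : ℚ) = 2 * (3 ^ n * catalan n) by
    exact_mod_cast this
  push_cast at h9
  linear_combination ((n + 2) * h9 - 3 ^ (n + 1) * hcat) / 9

end

/-- Cori–Vauquelin formula: `|W_n| = (2/(n+2))·|U_n| = (2/(n+2))·(3^n/(n+1))·binom(2n,n)`. -/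
theorem wellLabelled_count (n : ℕ) :
    (n + 2) * (WLTrees n).ncard = 2 * (EmbTrees n).ncard ∧
      (n + 2) * ((n + 1) * (WLTrees n).ncard) = 2 * (3 ^ n * Nat.choose (2 * n) n) := by
  rw [WLTrees_eq_trees, EmbTrees_eq_trees, Set.ncard_coe_finset, Set.ncard_coe_finset,
    LTree.card_trees_true]
  refine ⟨succ_succ_mul_card_trees_pos_one n, ?_⟩
  rw [mul_left_comm, succ_succ_mul_card_trees_pos_one, ← Nat.centralBinom_eq_two_mul_choose,
    ← succ_mul_catalan_eq_centralBinom]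
  ring
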